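/- Let a, b, c : ℝ → ℝ be given coefficient functions, let g0 > 0 and h0 < 0 be real constants, ξ0 ∈ ℝ, and let α, β, γ : ℝ → ℝ be differentiable functions satisfying α'(t) + b(t) + 2c(t)α(t) + 4a(t)α(t)² = 0, β'(t) + (c(t) + 4a(t)α(t))β(t) = 0, γ'(t) + a(t)β(t)² = 0. Suppose d(t) = -2a(t)α(t), g(t) = g0·a(t)·β(t)², h(t) = h0·a(t)·β(t)². Define θ(x,t) = α(t)x² + β(t)x + γ(t). Then ψ(x,t) = √(-g0/h0)·sech(√g0·(β(t)x + 2γ(t) - ξ0))·exp(i·θ(x,t)) and φ(x,t) = √(-g0/h0)·sech(√g0·(β(t)x + 2γ(t) - ξ0))·exp(-i·θ(x,t)) satisfy the coupled NLS system with variable coefficients: i ψ_t = -a(t) ψ_xx + b(t)x²ψ - i c(t) x ψ_x - i d(t) ψ + g(t) ψ + h(t)(|ψ|²+|φ|²)ψ and i φ_t = a(t) φ_xx - b(t)x²φ - i c(t) x φ_x - i d(t) φ - g(t) φ - h(t)(|ψ|²+|φ|²)φ. -/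

import Mathlib

/-!
Write `ψ = w(ξ) e^{iθ}` with `ξ = βx + 2γ - ξ0` and `θ = αx² + βx + γ`. Dividing the `ψ`-equation
by `e^{iθ}`, its imaginary part is `w'·(x R₂ + 2 R₃)` plus `w·(d + 2aα)`, and its real part is
`-w·(x² R₁ + x R₂ + R₃)` plus `aβ²·(w'' - g0 w - 2 h0 w³)`, once `g = g0 aβ²` and `h = h0 aβ²` are
inserted (with `|ψ|² + |φ|² = 2w²`); here `R₁, R₂, R₃` are the left-hand sides of the three
equations for `α, β, γ`. So everything vanishes as soon as the profile solves the stationary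
equation `w'' = g0 w + 2 h0 w³`, which `w(s) = k sech(√g0 s)` does for `h0 k² = -g0` because
`sech'' = sech - 2 sech³`. Since `φ = conj ψ`, the `φ`-equation is the conjugate of the
`ψ`-equation.
-/

/-- Partial derivative in the first (space) variable. -/
noncomputable def pderivX (f : ℝ → ℝ → ℂ) (x t : ℝ) : ℂ :=
  deriv (fun x' => f x' t) x

/-- Second partial derivative in the first (space) variable. -/
noncomputable def pderivXX (f : ℝ → ℝ → ℂ) (x t : ℝ) : ℂ :=
  iteratedDeriv 2 (fun x' => f x' t) x

/-- Partial derivative in the second (time) variable. -/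
noncomputable def pderivT (f : ℝ → ℝ → ℂ) (x t : ℝ) : ℂ :=
  deriv (fun t' => f x t') t

/-- The coupled NLS system with variable coefficients. -/
def CNLS (a b c d g h : ℝ → ℝ) (ψ φ : ℝ → ℝ → ℂ) : Prop :=
  ∀ x t : ℝ,
    (Complex.I * pderivT ψ x t =
      -(a t : ℂ) * pderivXX ψ x t + (b t : ℂ) * (x : ℂ) ^ 2 * ψ x t
        - Complex.I * (c t : ℂ) * (x : ℂ) * pderivX ψ x t
        - Complex.I * (d t : ℂ) * ψ x t + (g t : ℂ) * ψ x t
        + (h t : ℂ) * ((‖ψ x t‖ ^ 2 + ‖φ x t‖ ^ 2 : ℝ) : ℂ) * ψ x t)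
    ∧ (Complex.I * pderivT φ x t =
      (a t : ℂ) * pderivXX φ x t - (b t : ℂ) * (x : ℂ) ^ 2 * φ x t
        - Complex.I * (c t : ℂ) * (x : ℂ) * pderivX φ x t
        - Complex.I * (d t : ℂ) * φ x t - (g t : ℂ) * φ x t
        - (h t : ℂ) * ((‖ψ x t‖ ^ 2 + ‖φ x t‖ ^ 2 : ℝ) : ℂ) * φ x t)

section Sech

open Real

theorem hasDerivAt_sech (s : ℝ) :
    HasDerivAt (fun s => 1 / cosh s) (-sinh s / cosh s ^ 2) s := by
  simpa only [one_div] using (hasDerivAt_cosh s).fun_inv (cosh_pos s).ne'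

theorem hasDerivAt_neg_sinh_div_cosh_sq (s : ℝ) :
    HasDerivAt (fun s => -sinh s / cosh s ^ 2) (1 / cosh s - 2 * (1 / cosh s) ^ 3) s := by
  refine ((hasDerivAt_sinh s).fun_neg.fun_div ((hasDerivAt_cosh s).fun_pow 2)
    (pow_ne_zero 2 (cosh_pos s).ne')).congr_deriv ?_
  field_simp
  linear_combination (-2 * cosh s) * cosh_sq s

variable (k μ : ℝ)

theorem hasDerivAt_sech_profile (s : ℝ) :
    HasDerivAt (fun s => k * (1 / cosh (μ * s))) (k * μ * (-sinh (μ * s) / cosh (μ * s) ^ 2)) s :=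
  (((hasDerivAt_sech (μ * s)).comp s (hasDerivAt_const_mul μ)).const_mul k).congr_deriv (by ring)

theorem hasDerivAt_sech_profile_deriv {g0 h0 : ℝ} (hμ : μ ^ 2 = g0) (hk : h0 * k ^ 2 = -g0)
    (s : ℝ) :
    HasDerivAt (fun s => k * μ * (-sinh (μ * s) / cosh (μ * s) ^ 2))
      (g0 * (k * (1 / cosh (μ * s))) + 2 * h0 * (k * (1 / cosh (μ * s))) ^ 3) s := by
  refine (((hasDerivAt_neg_sinh_div_cosh_sq (μ * s)).comp s (hasDerivAt_const_mul μ)).const_mul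
    (k * μ)).congr_deriv ?_
  linear_combination (k * (1 / cosh (μ * s))) * (1 - 2 * (1 / cosh (μ * s)) ^ 2) * hμ
    - 2 * k * (1 / cosh (μ * s)) ^ 3 * hk

end Sech

open Complex ComplexConjugate

section Conjugate

variable (f : ℝ → ℝ → ℂ) (x t : ℝ)

theorem pderivX_conj : pderivX (fun x t => conj (f x t)) x t = conj (pderivX f x t) :=
  deriv.star

theorem pderivT_conj : pderivT (fun x t => conj (f x t)) x t = conj (pderivT f x t) :=
  deriv.star

theorem pderivXX_conj : pderivXX (fun x t => conj (f x t)) x t = conj (pderivXX f x t) := by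
  rw [pderivXX, pderivXX, iteratedDeriv_succ, iteratedDeriv_one, iteratedDeriv_succ,
    iteratedDeriv_one, show (deriv fun y => conj (f y t)) = fun y => conj (deriv (f · t) y) from
      funext fun _ => deriv.star]
  exact deriv.star

end Conjugate

theorem cnls_conj_of_first_eq {a b c d g h : ℝ → ℝ} {ψ : ℝ → ℝ → ℂ}
    (hψ : ∀ x t, I * pderivT ψ x t =
      -(a t : ℂ) * pderivXX ψ x t + (b t : ℂ) * (x : ℂ) ^ 2 * ψ x t
        - I * (c t : ℂ) * (x : ℂ) * pderivX ψ x t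
        - I * (d t : ℂ) * ψ x t + (g t : ℂ) * ψ x t
        + (h t : ℂ) * ((‖ψ x t‖ ^ 2 + ‖conj (ψ x t)‖ ^ 2 : ℝ) : ℂ) * ψ x t) :
    CNLS a b c d g h ψ (fun x t => conj (ψ x t)) := by
  intro x t
  refine ⟨hψ x t, ?_⟩
  rw [pderivX_conj, pderivXX_conj, pderivT_conj]
  have hψ_conj := congrArg conj (hψ x t)
  simp only [map_add, map_sub, map_mul, map_neg, map_pow, conj_I, conj_ofReal] at hψ_conj
  linear_combination -hψ_conj

theorem HasDerivAt.mul_cexp_ofReal {ρ : ℝ → ℂ} {ϑ : ℝ → ℝ} {ρ' : ℂ} {ϑ' y : ℝ} (e : ℂ)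
    (hρ : HasDerivAt ρ ρ' y) (hϑ : HasDerivAt ϑ ϑ' y) :
    HasDerivAt (fun y => ρ y * cexp (e * ϑ y)) ((ρ' + e * ϑ' * ρ y) * cexp (e * ϑ y)) y :=
  (hρ.mul (hϑ.ofReal_comp.const_mul e).cexp).congr_deriv (by ring)

theorem hasDerivAt_quadratic (p q r x : ℝ) :
    HasDerivAt (fun x => p * x ^ 2 + q * x + r) (2 * p * x + q) x :=
  (((hasDerivAt_pow 2 x).const_mul p).add (hasDerivAt_const_mul q)).add_const r
    |>.congr_deriv (by simp; ring)

section ChirpedWave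

variable (w : ℝ → ℝ) (α β γ : ℝ → ℝ) (ξ0 : ℝ)

noncomputable def chirpedWave (x t : ℝ) : ℂ :=
  (w (β t * x + 2 * γ t - ξ0) : ℂ) * cexp (I * ((α t * x ^ 2 + β t * x + γ t : ℝ) : ℂ))

theorem norm_chirpedWave (x t : ℝ) :
    ‖chirpedWave w α β γ ξ0 x t‖ = |w (β t * x + 2 * γ t - ξ0)| := by
  rw [chirpedWave, norm_mul, norm_exp_I_mul_ofReal, mul_one, norm_real, Real.norm_eq_abs]

variable {w} {w' : ℝ → ℝ} (hw : ∀ s, HasDerivAt w (w' s) s) (x t : ℝ)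
include hw

theorem hasDerivAt_chirpedWave_x :
    HasDerivAt (fun x => chirpedWave w α β γ ξ0 x t)
      ((w' (β t * x + 2 * γ t - ξ0) * β t + I * (2 * α t * x + β t) * w (β t * x + 2 * γ t - ξ0))
        * cexp (I * ((α t * x ^ 2 + β t * x + γ t : ℝ) : ℂ))) x := by
  have hξ : HasDerivAt (fun x => β t * x + 2 * γ t - ξ0) (β t) x :=
    (hasDerivAt_const_mul (β t)).add_const _ |>.sub_const _
  refine (((hw _).comp x hξ).ofReal_comp.mul_cexp_ofReal I
    (hasDerivAt_quadratic _ _ _ x)).congr_deriv ?_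
  simp only [Function.comp_apply]
  push_cast
  ring

theorem pderivXX_chirpedWave {w'' : ℝ → ℝ} (hw' : ∀ s, HasDerivAt w' (w'' s) s) :
    pderivXX (chirpedWave w α β γ ξ0) x t =
      (w'' (β t * x + 2 * γ t - ξ0) * β t ^ 2
        + 2 * I * (2 * α t * x + β t) * β t * w' (β t * x + 2 * γ t - ξ0)
        + (2 * I * α t - (2 * α t * x + β t) ^ 2) * w (β t * x + 2 * γ t - ξ0))
        * cexp (I * ((α t * x ^ 2 + β t * x + γ t : ℝ) : ℂ)) := by
  have hξ : HasDerivAt (fun x => β t * x + 2 * γ t - ξ0) (β t) x :=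
    (hasDerivAt_const_mul (β t)).add_const _ |>.sub_const _
  have hθx : HasDerivAt (fun x : ℝ => (2 * α t * x + β t : ℂ)) (2 * α t) x :=
    (hasDerivAt_const_mul (2 * (α t : ℂ))).comp_ofReal.add_const _
  have hamp : HasDerivAt
      (fun x => (w' (β t * x + 2 * γ t - ξ0) * β t
        + I * (2 * α t * x + β t) * w (β t * x + 2 * γ t - ξ0) : ℂ))
      (w'' (β t * x + 2 * γ t - ξ0) * β t ^ 2 + I * (2 * α t) * w (β t * x + 2 * γ t - ξ0)
        + I * (2 * α t * x + β t) * (w' (β t * x + 2 * γ t - ξ0) * β t)) x := by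
    refine ((((hw' _).comp x hξ).ofReal_comp.mul_const (β t : ℂ)).fun_add
      ((hθx.const_mul I).fun_mul ((hw _).comp x hξ).ofReal_comp)).congr_deriv ?_
    simp only [Function.comp_apply]
    push_cast
    ring
  rw [pderivXX, iteratedDeriv_succ, iteratedDeriv_one,
    funext fun x => (hasDerivAt_chirpedWave_x α β γ ξ0 hw x t).deriv,
    (hamp.mul_cexp_ofReal I (hasDerivAt_quadratic _ _ _ x)).deriv]
  push_cast
  ring_nf
  simp only [I_sq]
  ring

theorem pderivT_chirpedWave (hα : DifferentiableAt ℝ α t) (hβ : DifferentiableAt ℝ β t)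
    (hγ : DifferentiableAt ℝ γ t) :
    pderivT (chirpedWave w α β γ ξ0) x t =
      (w' (β t * x + 2 * γ t - ξ0) * (deriv β t * x + 2 * deriv γ t)
        + I * (deriv α t * x ^ 2 + deriv β t * x + deriv γ t) * w (β t * x + 2 * γ t - ξ0))
        * cexp (I * ((α t * x ^ 2 + β t * x + γ t : ℝ) : ℂ)) := by
  have hξ : HasDerivAt (fun t => β t * x + 2 * γ t - ξ0) (deriv β t * x + 2 * deriv γ t) t :=
    ((hβ.hasDerivAt.mul_const x).add (hγ.hasDerivAt.const_mul 2)).sub_const _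
  have hθ : HasDerivAt (fun t => α t * x ^ 2 + β t * x + γ t)
      (deriv α t * x ^ 2 + deriv β t * x + deriv γ t) t :=
    ((hα.hasDerivAt.mul_const _).add (hβ.hasDerivAt.mul_const x)).add hγ.hasDerivAt
  refine (((hw _).comp t hξ).ofReal_comp.mul_cexp_ofReal I hθ).deriv.trans ?_
  simp only [Function.comp_apply]
  push_cast
  ring

end ChirpedWave

theorem cnls_chirpedWave {a b c d g h α β γ w w' : ℝ → ℝ} {g0 h0 ξ0 : ℝ}
    (hw : ∀ s, HasDerivAt w (w' s) s)
    (hw' : ∀ s, HasDerivAt w' (g0 * w s + 2 * h0 * w s ^ 3) s)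
    (hα : Differentiable ℝ α) (hβ : Differentiable ℝ β) (hγ : Differentiable ℝ γ)
    (hRic1 : ∀ t, deriv α t + b t + 2 * c t * α t + 4 * a t * (α t) ^ 2 = 0)
    (hRic2 : ∀ t, deriv β t + (c t + 4 * a t * α t) * β t = 0)
    (hRic3 : ∀ t, deriv γ t + a t * (β t) ^ 2 = 0)
    (hd : ∀ t, d t = -2 * a t * α t)
    (hg : ∀ t, g t = g0 * a t * (β t) ^ 2)
    (hh : ∀ t, h t = h0 * a t * (β t) ^ 2) :
    CNLS a b c d g h (chirpedWave w α β γ ξ0) (fun x t => conj (chirpedWave w α β γ ξ0 x t)) := by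
  refine cnls_conj_of_first_eq fun x t => ?_
  have R₁ : (deriv α t + b t + 2 * c t * α t + 4 * a t * (α t) ^ 2 : ℂ) = 0 := by
    exact_mod_cast hRic1 t
  have R₂ : (deriv β t + (c t + 4 * a t * α t) * β t : ℂ) = 0 := by exact_mod_cast hRic2 t
  have R₃ : (deriv γ t + a t * (β t) ^ 2 : ℂ) = 0 := by exact_mod_cast hRic3 t
  rw [pderivT_chirpedWave α β γ ξ0 hw x t (hα t) (hβ t) (hγ t),
    pderivXX_chirpedWave α β γ ξ0 hw x t hw', pderivX,
    (hasDerivAt_chirpedWave_x α β γ ξ0 hw x t).deriv, norm_conj, norm_chirpedWave, sq_abs,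
    chirpedWave, hd, hg, hh]
  set E := cexp (I * ((α t * x ^ 2 + β t * x + γ t : ℝ) : ℂ))
  set ξ := β t * x + 2 * γ t - ξ0
  push_cast
  linear_combination E * (-w ξ * (x ^ 2 * R₁ + x * R₂ + R₃) + I * w' ξ * (x * R₂ + 2 * R₃))
    + w ξ * E * (x ^ 2 * ((deriv α t : ℝ) + 2 * α t * c t) + x * ((deriv β t : ℝ) + c t * β t)
      + (deriv γ t : ℝ)) * I_sq

/-- The bell-shaped (bright soliton) solutions of the paper solve the
variable-coefficient coupled NLS system. -/
theorem bright_soliton_solutions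
    (a b c d g h : ℝ → ℝ) (g0 h0 ξ0 : ℝ) (hg0 : 0 < g0) (hh0 : h0 < 0)
    (α β γ : ℝ → ℝ)
    (hαdiff : Differentiable ℝ α) (hβdiff : Differentiable ℝ β)
    (hγdiff : Differentiable ℝ γ)
    (hRic1 : ∀ t, deriv α t + b t + 2 * c t * α t + 4 * a t * (α t) ^ 2 = 0)
    (hRic2 : ∀ t, deriv β t + (c t + 4 * a t * α t) * β t = 0)
    (hRic3 : ∀ t, deriv γ t + a t * (β t) ^ 2 = 0)
    (hd : ∀ t, d t = -2 * a t * α t)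
    (hg : ∀ t, g t = g0 * a t * (β t) ^ 2)
    (hh : ∀ t, h t = h0 * a t * (β t) ^ 2)
    (θ : ℝ → ℝ → ℝ) (hθ : ∀ x t, θ x t = α t * x ^ 2 + β t * x + γ t) :
    CNLS a b c d g h
      (fun x t => ((Real.sqrt (-g0 / h0)
          * (1 / Real.cosh (Real.sqrt g0 * (β t * x + 2 * γ t - ξ0))) : ℝ) : ℂ)
        * Complex.exp (Complex.I * (θ x t : ℂ)))
      (fun x t => ((Real.sqrt (-g0 / h0)
          * (1 / Real.cosh (Real.sqrt g0 * (β t * x + 2 * γ t - ξ0))) : ℝ) : ℂ)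
        * Complex.exp (-(Complex.I * (θ x t : ℂ)))) := by
  have hμ : Real.sqrt g0 ^ 2 = g0 := Real.sq_sqrt hg0.le
  have hk : h0 * Real.sqrt (-g0 / h0) ^ 2 = -g0 := by
    rw [Real.sq_sqrt (div_nonneg_of_nonpos (by linarith) hh0.le)]
    field_simp [hh0.ne]
  simp only [hθ]
  convert cnls_chirpedWave (ξ0 := ξ0) (hasDerivAt_sech_profile _ _)
    (hasDerivAt_sech_profile_deriv _ _ hμ hk) hαdiff hβdiff hγdiff hRic1 hRic2 hRic3 hd hg hh
    using 1
  · rfl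
  · funext x t
    rw [chirpedWave, map_mul, conj_ofReal, ← exp_conj, map_mul, conj_I, conj_ofReal, neg_mul]
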